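/- arXiv:1607.04456 — 3 statements merged into one kernel-verified Lean document; each statement's English description precedes it below -/
import Mathlib

section
/- Assume the transition relation next is total. If assertions inv and rank satisfy: (1) p(s) implies inv(s); (2) whenever inv(s) and ¬r(s), then q(s) holds and there exists s' with next(s,s'), inv(s'), and rank(s,s'); and (3) rank is well-founded (there is no infinite sequence s₀, s₁, s₂, … with rank(sᵢ, sᵢ₊₁) for all i), then every state s with p(s) satisfies E(q U r): there exists a path π from s and an index j such that r(π j) holds and q(π i) holds for all i < j. -/
theorem eu_rule_sound {S : Type*} (next : S → S → Prop) (p q r inv : S → Prop)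
    (rank : S → S → Prop)
    (htotal : ∀ s, ∃ s', next s s')
    (h1 : ∀ s, p s → inv s)
    (h2 : ∀ s, inv s → ¬ r s → q s ∧ ∃ s', next s s' ∧ inv s' ∧ rank s s')
    (h3 : ¬ ∃ f : ℕ → S, ∀ i, rank (f i) (f (i+1))) :
    ∀ s, p s → ∃ π : ℕ → S, π 0 = s ∧ (∀ i, next (π i) (π (i+1))) ∧
      ∃ j, r (π j) ∧ ∀ i < j, q (π i) := by
  classical
  intro s hp
  set step : S → S := fun t =>
    if h : inv t ∧ ¬ r t then (h2 t h.1 h.2).2.choose else (htotal t).choose with hstep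
  have hnext : ∀ t, next t (step t) := by
    intro t
    by_cases h : inv t ∧ ¬ r t
    · simp only [hstep, dif_pos h]
      exact (h2 t h.1 h.2).2.choose_spec.1
    · simp only [hstep, dif_neg h]
      exact (htotal t).choose_spec
  have hinvstep : ∀ t, inv t → ¬ r t → inv (step t) ∧ rank t (step t) := by
    intro t ht hr
    simp only [hstep, dif_pos (And.intro ht hr)]
    exact ⟨(h2 t ht hr).2.choose_spec.2.1, (h2 t ht hr).2.choose_spec.2.2⟩
  set π : ℕ → S := fun n => step^[n] s with hπ
  have hsucc : ∀ n, π (n+1) = step (π n) := by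
    intro n; simp [hπ, Function.iterate_succ_apply']
  have hpath : ∀ i, next (π i) (π (i+1)) := by
    intro i; rw [hsucc]; exact hnext _
  have hex : ∃ j, r (π j) := by
    by_contra hc
    push_neg at hc
    have hinv : ∀ n, inv (π n) := by
      intro n
      induction n with
      | zero => simpa [hπ] using h1 s hp
      | succ n ih => rw [hsucc]; exact (hinvstep _ ih (hc n)).1
    exact h3 ⟨π, fun i => by rw [hsucc]; exact (hinvstep _ (hinv i) (hc i)).2⟩
  refine ⟨π, by simp [hπ], hpath, Nat.find hex, Nat.find_spec hex, ?_⟩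
  have hinvle : ∀ i, i ≤ Nat.find hex → inv (π i) := by
    intro i
    induction i with
    | zero => intro _; simpa [hπ] using h1 s hp
    | succ n ih =>
      intro hle
      have hn : n < Nat.find hex := Nat.lt_of_succ_le hle
      rw [hsucc]
      exact (hinvstep _ (ih hn.le) (Nat.find_min hex hn)).1
  intro i hi
  exact (h2 _ (hinvle i hi.le) (Nat.find_min hex hi)).1
end

section
/- If assertions inv and rank satisfy: (1) p(s) implies inv(s); (2) whenever inv(s), ¬r(s), and next(s,s'), then q(s), inv(s'), and rank(s,s') all hold; and (3) rank admits no infinite descending chain (no f : ℕ → S with rank(f i, f (i+1)) for all i), then every state s with p(s) satisfies A(q U r): for every path π from s there exists j with r(π j) and q(π i) for all i < j. -/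
theorem au_rule_sound {S : Type*} (next : S → S → Prop) (p q r inv : S → Prop)
    (rank : S → S → Prop)
    (h1 : ∀ s, p s → inv s)
    (h2 : ∀ s s', inv s → ¬ r s → next s s' → q s ∧ inv s' ∧ rank s s')
    (h3 : ¬ ∃ f : ℕ → S, ∀ i, rank (f i) (f (i+1))) :
    ∀ s, p s → ∀ π : ℕ → S, π 0 = s → (∀ i, next (π i) (π (i+1))) →
      ∃ j, r (π j) ∧ ∀ i < j, q (π i) := by
  intro s hp π h0 hnext
  have hinv : ∀ n, (∀ i < n, ¬ r (π i)) → inv (π n) := by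
    intro n
    induction n with
    | zero => intro _; rw [h0]; exact h1 s hp
    | succ k ih =>
      intro h
      have hk : inv (π k) := ih (fun i hi => h i (Nat.lt_succ_of_lt hi))
      exact (h2 _ _ hk (h k (Nat.lt_succ_self k)) (hnext k)).2.1
  have hex : ∃ j, r (π j) := by
    by_contra hno
    push_neg at hno
    apply h3
    refine ⟨π, fun i => ?_⟩
    have hi : inv (π i) := hinv i (fun j _ => hno j)
    exact (h2 _ _ hi (hno i) (hnext i)).2.2
  classical
  refine ⟨Nat.find hex, Nat.find_spec hex, fun i hi => ?_⟩
  have hnr : ∀ k < Nat.find hex, ¬ r (π k) := fun k hk => Nat.find_min hex hk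
  exact (h2 _ _ (hinv i (fun k hk => hnr k (hk.trans hi))) (hnr i hi) (hnext i)).1
end

section
/- Completeness of the AU rule for a well-founded setting: if every state s with p(s) satisfies A(q U r), and next is total, then there exist assertions inv and rank such that: (1) p(s) implies inv(s); (2) inv(s), ¬r(s), and next(s,s') together imply q(s), inv(s'), and rank(s,s'); and (3) there is no infinite sequence f : ℕ → S with rank(f i, f (i+1)) for all i. (One may take inv to be the set of states satisfying A(q U r), and rank(s,s') to hold iff inv(s), ¬r(s), next(s,s').) -/
theorem au_rule_complete {S : Type*} (next : S → S → Prop)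
    (htotal : ∀ s, ∃ s', next s s') (p q r : S → Prop)
    (h : ∀ s, p s → ∀ π : ℕ → S, π 0 = s → (∀ i, next (π i) (π (i+1))) →
      ∃ j, r (π j) ∧ ∀ i < j, q (π i)) :
    ∃ (inv : S → Prop) (rank : S → S → Prop),
      (∀ s, p s → inv s) ∧
      (∀ s s', inv s → ¬ r s → next s s' → q s ∧ inv s' ∧ rank s s') ∧
      (¬ ∃ f : ℕ → S, ∀ i, rank (f i) (f (i+1))) := by
  classical
  set inv : S → Prop := fun s =>
    ∀ π : ℕ → S, π 0 = s → (∀ i, next (π i) (π (i+1))) →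
      ∃ j, r (π j) ∧ ∀ i < j, q (π i) with hinv
  refine ⟨inv, fun s s' => inv s ∧ ¬ r s ∧ next s s', fun s hp => h s hp, ?_, ?_⟩
  · intro s s' hs hnr hn
    have hq : q s := by
      let succ : S → S := fun t => Classical.choose (htotal t)
      have hsucc : ∀ t, next t (succ t) := fun t => Classical.choose_spec (htotal t)
      let π : ℕ → S := fun n => succ^[n] s
      obtain ⟨j, hj, hlt⟩ := hs π rfl (by
        intro i
        simp only [π, Function.iterate_succ_apply']
        exact hsucc _)
      cases j with
      | zero => exact absurd hj hnr
      | succ k => exact hlt 0 (Nat.succ_pos k)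
    refine ⟨hq, ?_, hs, hnr, hn⟩
    intro π' h0 hstep
    obtain ⟨j, hj, hlt⟩ := hs (fun n => Nat.casesOn n s π') rfl (by
      intro i
      cases i with
      | zero => simpa [h0] using hn
      | succ k => exact hstep k)
    cases j with
    | zero => exact absurd hj hnr
    | succ k =>
      exact ⟨k, hj, fun i hi => hlt (i+1) (Nat.succ_lt_succ hi)⟩
  · rintro ⟨f, hf⟩
    have hinv0 : inv (f 0) := (hf 0).1
    obtain ⟨j, hj, -⟩ := hinv0 f rfl (fun i => (hf i).2.2)
    exact (hf j).2.1 hj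
end
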